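/- Consider n agents and m chores where each agent has a binary supermodular cost c_i with c_i(∅)=0. Define the minimax share τ_i = min over partitions (X_1,...,X_n) of [m] of max_j c_i(X_j). Then τ_i = ⌈(m - r_{i×n}([m]))/n⌉, where r_{i×n} is the rank function of the n-fold matroid union of the matroid M_i associated with c_i. -/
import Mathlib


/-- `X` is a partition of the chores `Fin m` into `n` bundles. -/
def IsPartition {n m : ℕ} (X : Fin n → Finset (Fin m)) : Prop :=
  (∀ i j : Fin n, i ≠ j → Disjoint (X i) (X j)) ∧
    Finset.univ.biUnion X = (Finset.univ : Finset (Fin m))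

/-- Binary marginals for a nonnegative-integer-valued cost function. -/
def BinaryMarginals {m : ℕ} (c : Finset (Fin m) → ℕ) : Prop :=
  ∀ (S : Finset (Fin m)) (a : Fin m), a ∉ S →
    c (insert a S) = c S ∨ c (insert a S) = c S + 1

/-- Supermodularity (increasing marginals), in addition form. -/
def Supermod {m : ℕ} (c : Finset (Fin m) → ℕ) : Prop :=
  ∀ (S T : Finset (Fin m)) (a : Fin m), S ⊆ T → a ∉ T →
    c (insert a S) + c T ≤ c (insert a T) + c S

/-- `T` is independent in the `n`-fold union of the matroid `M` associated with the
binary supermodular cost `c` (where `S` is independent in `M` exactly when `c S = 0`). -/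
def NFoldUnionIndep (n : ℕ) {m : ℕ} (c : Finset (Fin m) → ℕ) (T : Finset (Fin m)) : Prop :=
  ∃ I : Fin n → Finset (Fin m), (∀ j, c (I j) = 0) ∧ T = Finset.univ.biUnion I

variable {m : ℕ} {c : Finset (Fin m) → ℕ}

lemma le_c_insert (hmarg : BinaryMarginals c) (S : Finset (Fin m)) (a : Fin m) :
    c S ≤ c (insert a S) := by
  by_cases h : a ∈ S
  · rw [Finset.insert_eq_self.2 h]
  · rcases hmarg S a h with h' | h' <;> omega

lemma c_insert_le (hmarg : BinaryMarginals c) (S : Finset (Fin m)) (a : Fin m) :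
    c (insert a S) ≤ c S + 1 := by
  by_cases h : a ∈ S
  · rw [Finset.insert_eq_self.2 h]; omega
  · rcases hmarg S a h with h' | h' <;> omega

lemma c_mono_aux (hmarg : BinaryMarginals c) :
    ∀ (k : ℕ) (S T : Finset (Fin m)), S ⊆ T → (T \ S).card = k →
      c S ≤ c T ∧ c T ≤ c S + k := by
  intro k
  induction k with
  | zero =>
    intro S T hST h
    have : T ⊆ S := by
      intro x hx
      by_contra hxs
      have : x ∈ T \ S := Finset.mem_sdiff.2 ⟨hx, hxs⟩
      rw [Finset.card_eq_zero] at h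
      simp [h] at this
    have : S = T := Finset.Subset.antisymm hST this
    subst this; omega
  | succ k ih =>
    intro S T hST h
    have hne : (T \ S).Nonempty := by
      rw [← Finset.card_pos, h]; omega
    obtain ⟨a, ha⟩ := hne
    rw [Finset.mem_sdiff] at ha
    have hsub : insert a S ⊆ T := Finset.insert_subset ha.1 hST
    have hcard : (T \ insert a S).card = k := by
      rw [Finset.sdiff_insert, Finset.card_erase_of_mem (Finset.mem_sdiff.2 ha), h]
      omega
    have := ih (insert a S) T hsub hcard
    have h1 := le_c_insert hmarg S a
    have h2 := c_insert_le hmarg S a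
    omega

lemma c_mono (hmarg : BinaryMarginals c) {S T : Finset (Fin m)} (h : S ⊆ T) : c S ≤ c T :=
  (c_mono_aux hmarg _ S T h rfl).1

lemma c_le_add (hmarg : BinaryMarginals c) {S T : Finset (Fin m)} (h : S ⊆ T) :
    c T ≤ c S + (T \ S).card :=
  (c_mono_aux hmarg _ S T h rfl).2

/-- If `c S > 0` there is an element whose removal drops `c` by one. -/
lemma exists_drop (hmarg : BinaryMarginals c) (hsuper : Supermod c) (h0 : c ∅ = 0)
    (S : Finset (Fin m)) (hS : 0 < c S) :
    ∃ a ∈ S, c (S.erase a) + 1 = c S := by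
  by_contra hcon
  push_neg at hcon
  have heq : ∀ a ∈ S, c (S.erase a) = c S := by
    intro a ha
    have h1 : c S ≤ c (insert a (S.erase a)) := by
      rw [Finset.insert_erase ha]
    have h2 := c_insert_le hmarg (S.erase a) a
    rw [Finset.insert_erase ha] at h2
    have h3 := c_mono hmarg (Finset.erase_subset a S)
    have := hcon a ha
    omega
  have key : ∀ (k : ℕ) (T : Finset (Fin m)), T ⊆ S → T.card = k → c T = 0 := by
    intro k
    induction k with
    | zero => intro T _ h; rw [Finset.card_eq_zero] at h; rw [h, h0]
    | succ k ih =>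
      intro T hTS h
      have hne : T.Nonempty := by rw [← Finset.card_pos]; omega
      obtain ⟨a, ha⟩ := hne
      have haS : a ∈ S := hTS ha
      have hT' : c (T.erase a) = 0 := by
        refine ih _ ((Finset.erase_subset a T).trans hTS) ?_
        rw [Finset.card_erase_of_mem ha]; omega
      have hsub : T.erase a ⊆ S.erase a := Finset.erase_subset_erase a hTS
      have := hsuper (T.erase a) (S.erase a) a hsub (Finset.notMem_erase a S)
      rw [Finset.insert_erase ha, Finset.insert_erase haS, heq a haS, hT'] at this
      omega
  have := key S.card S le_rfl rfl
  omega

/-- Every set contains an independent subset of size `|S| - c S`. -/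
lemma exists_indep (hmarg : BinaryMarginals c) (hsuper : Supermod c) (h0 : c ∅ = 0) :
    ∀ (k : ℕ) (S : Finset (Fin m)), S.card = k →
      ∃ I, I ⊆ S ∧ c I = 0 ∧ I.card + c S = S.card := by
  intro k
  induction k with
  | zero =>
    intro S h; rw [Finset.card_eq_zero] at h
    exact ⟨∅, by simp [h, h0]⟩
  | succ k ih =>
    intro S h
    by_cases hc : c S = 0
    · exact ⟨S, Finset.Subset.rfl, hc, by omega⟩
    · obtain ⟨a, ha, hdrop⟩ := exists_drop hmarg hsuper h0 S (by omega)
      have hcard : (S.erase a).card = k := by rw [Finset.card_erase_of_mem ha]; omega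
      obtain ⟨I, hIsub, hI0, hIcard⟩ := ih (S.erase a) hcard
      exact ⟨I, hIsub.trans (Finset.erase_subset a S), hI0, by omega⟩

/-- Make a family of sets pairwise disjoint keeping the same union. -/
lemma disjointify {n : ℕ} (I : Fin n → Finset (Fin m)) :
    ∃ J : Fin n → Finset (Fin m), (∀ j, J j ⊆ I j) ∧
      (∀ i j, i ≠ j → Disjoint (J i) (J j)) ∧
      Finset.univ.biUnion J = Finset.univ.biUnion I := by
  refine ⟨fun j => I j \ (Finset.univ.filter (fun k => k < j)).biUnion I,
    fun j => Finset.sdiff_subset, ?_, ?_⟩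
  · have key : ∀ i j : Fin n, i < j →
        Disjoint (I i \ (Finset.univ.filter (fun k => k < i)).biUnion I)
          (I j \ (Finset.univ.filter (fun k => k < j)).biUnion I) := by
      intro i j hij
      refine Finset.disjoint_left.2 fun x hx hx' => ?_
      rw [Finset.mem_sdiff] at hx hx'
      exact hx'.2 (Finset.mem_biUnion.2 ⟨i, Finset.mem_filter.2 ⟨Finset.mem_univ i, hij⟩, hx.1⟩)
    intro i j hij
    rcases lt_or_gt_of_ne hij with h | h
    · exact key i j h
    · exact (key j i h).symm
  · apply Finset.Subset.antisymm
    · intro x hx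
      obtain ⟨j, -, hj⟩ := Finset.mem_biUnion.1 hx
      exact Finset.mem_biUnion.2 ⟨j, Finset.mem_univ j, (Finset.mem_sdiff.1 hj).1⟩
    · intro x hx
      rw [Finset.mem_biUnion] at hx
      obtain ⟨j, -, hj⟩ := hx
      have hne : (Finset.univ.filter (fun k : Fin n => x ∈ I k)).Nonempty :=
        ⟨j, Finset.mem_filter.2 ⟨Finset.mem_univ j, hj⟩⟩
      set j0 := (Finset.univ.filter (fun k : Fin n => x ∈ I k)).min' hne with hj0
      have hj0mem : x ∈ I j0 :=
        (Finset.mem_filter.1 ((Finset.univ.filter (fun k : Fin n => x ∈ I k)).min'_mem hne)).2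
      refine Finset.mem_biUnion.2 ⟨j0, Finset.mem_univ j0, Finset.mem_sdiff.2 ⟨hj0mem, ?_⟩⟩
      intro hmem
      rw [Finset.mem_biUnion] at hmem
      obtain ⟨k, hk, hxk⟩ := hmem
      rw [Finset.mem_filter] at hk
      have : j0 ≤ k := Finset.min'_le _ k (Finset.mem_filter.2 ⟨Finset.mem_univ k, hxk⟩)
      exact absurd hk.2 (not_lt.2 this)

/-- Split a set into `n` pieces of size at most `k`. -/
lemma split_pieces : ∀ (n k : ℕ) (R : Finset (Fin m)), R.card ≤ n * k →
    ∃ P : Fin n → Finset (Fin m), (∀ j, (P j).card ≤ k) ∧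
      (∀ i j, i ≠ j → Disjoint (P i) (P j)) ∧ Finset.univ.biUnion P = R := by
  intro n
  induction n with
  | zero =>
    intro k R h
    simp only [Nat.zero_mul, Nat.le_zero, Finset.card_eq_zero] at h
    exact ⟨Fin.elim0, fun j => j.elim0, fun i => i.elim0, by simp [h]⟩
  | succ n ih =>
    intro k R h
    obtain ⟨S, hSR, hScard⟩ := Finset.exists_subset_card_eq (min_le_right k R.card)
    rw [Nat.succ_mul] at h
    have hrest : (R \ S).card ≤ n * k := by
      rw [Finset.card_sdiff_of_subset hSR, hScard]
      rcases le_total k R.card with h' | h'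
      · rw [min_eq_left h']; omega
      · rw [min_eq_right h']; omega
    obtain ⟨P', hP'card, hP'disj, hP'union⟩ := ih k (R \ S) hrest
    have hP'sub : ∀ j, P' j ⊆ R \ S := fun j => by
      rw [← hP'union]; exact Finset.subset_biUnion_of_mem P' (Finset.mem_univ j)
    refine ⟨Fin.cons S P', ?_, ?_, ?_⟩
    · intro j
      induction j using Fin.cases with
      | zero => simpa using hScard.trans_le (min_le_left _ _)
      | succ j => simpa using hP'card j
    · intro i j hij
      induction i using Fin.cases with
      | zero =>
        induction j using Fin.cases with
        | zero => exact absurd rfl hij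
        | succ j =>
          simp only [Fin.cons_zero, Fin.cons_succ]
          exact Finset.disjoint_sdiff.mono_right (hP'sub j)
      | succ i =>
        induction j using Fin.cases with
        | zero =>
          simp only [Fin.cons_zero, Fin.cons_succ]
          exact (Finset.disjoint_sdiff.mono_right (hP'sub i)).symm
        | succ j =>
          simp only [Fin.cons_succ]
          exact hP'disj i j (fun hh => hij (by rw [hh]))
    · ext x
      simp only [Finset.mem_biUnion, Finset.mem_univ, true_and]
      constructor
      · rintro ⟨j, hj⟩
        induction j using Fin.cases with
        | zero => exact hSR (by simpa using hj)
        | succ j =>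
          have : x ∈ P' j := by simpa using hj
          exact (Finset.mem_sdiff.1 (hP'sub j this)).1
      · intro hx
        by_cases hxS : x ∈ S
        · exact ⟨0, by simpa using hxS⟩
        · have : x ∈ Finset.univ.biUnion P' := by
            rw [hP'union]; exact Finset.mem_sdiff.2 ⟨hx, hxS⟩
          obtain ⟨j, -, hj⟩ := Finset.mem_biUnion.1 this
          exact ⟨j.succ, by simpa using hj⟩

/-- the minimax share of an agent with binary supermodular cost `c` equals
`⌈(m - r_{i×n}([m])) / n⌉`, where `r_{i×n}` is the rank function of the `n`-fold union
of the matroid associated with `c`. -/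
theorem minimax_share_formula (n m : ℕ) (hn : 1 ≤ n)
    (c : Finset (Fin m) → ℕ)
    (hmarg : BinaryMarginals c) (hsuper : Supermod c) (h0 : c ∅ = 0)
    (rkn : ℕ)
    (hrkn : IsGreatest {s : ℕ | ∃ T : Finset (Fin m), NFoldUnionIndep n c T ∧ s = T.card} rkn)
    (τ : ℕ)
    (hτ : IsLeast {t : ℕ | ∃ X : Fin n → Finset (Fin m), IsPartition X ∧
        IsGreatest (Set.range fun j => c (X j)) t} τ) :
    (τ : ℤ) = ⌈((m : ℚ) - (rkn : ℚ)) / (n : ℚ)⌉ := by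
  obtain ⟨⟨T, ⟨I, hI0, hTI⟩, hTcard⟩, hub⟩ := hrkn
  obtain ⟨⟨X, ⟨hXdisj, hXunion⟩, hgr⟩, hlb⟩ := hτ
  have hrm : rkn ≤ m := by
    rw [hTcard]
    calc T.card ≤ (Finset.univ : Finset (Fin m)).card :=
          Finset.card_le_card (Finset.subset_univ T)
      _ = m := Finset.card_fin m
  -- Lower bound fact: m ≤ rkn + n * τ
  have F1 : m ≤ rkn + n * τ := by
    choose Ix hIxsub hIx0 hIxcard using
      fun j => exists_indep hmarg hsuper h0 (X j).card (X j) rfl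
    have hdisj' : ∀ i ∈ Finset.univ, ∀ j ∈ Finset.univ, i ≠ j → Disjoint (Ix i) (Ix j) :=
      fun i _ j _ hij => (hXdisj i j hij).mono (hIxsub i) (hIxsub j)
    have h1 : (Finset.univ.biUnion Ix).card ≤ rkn := hub ⟨_, ⟨Ix, hIx0, rfl⟩, rfl⟩
    rw [Finset.card_biUnion hdisj'] at h1
    have hm : ∑ j, (X j).card = m := by
      rw [← Finset.card_biUnion (fun i _ j _ hij => hXdisj i j hij), hXunion, Finset.card_fin]
    have hcle : ∀ j, c (X j) ≤ τ := fun j => hgr.2 ⟨j, rfl⟩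
    have hsum : ∑ j, c (X j) ≤ n * τ := by
      calc ∑ _j : Fin n, c (X _j) ≤ ∑ _j : Fin n, τ :=
            Finset.sum_le_sum (fun j _ => hcle j)
        _ = n * τ := by simp [Finset.sum_const, mul_comm]
    have hsplit : ∑ j, ((Ix j).card + c (X j)) = m := by
      rw [Finset.sum_congr rfl (fun j _ => hIxcard j)]; exact hm
    rw [Finset.sum_add_distrib] at hsplit
    omega
  -- Upper bound fact: any K with m ≤ rkn + n*K gives τ ≤ K
  have F2 : ∀ K : ℕ, m ≤ rkn + n * K → τ ≤ K := by
    intro K hK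
    obtain ⟨J, hJsub, hJdisj, hJunion⟩ := disjointify I
    have hJ0 : ∀ j, c (J j) = 0 := fun j =>
      Nat.le_zero.1 (hI0 j ▸ c_mono hmarg (hJsub j))
    set R := (Finset.univ : Finset (Fin m)) \ T with hR
    have hRcard : R.card = m - rkn := by
      rw [hR, Finset.card_sdiff_of_subset (Finset.subset_univ T), Finset.card_fin, hTcard]
    obtain ⟨P, hPcard, hPdisj, hPunion⟩ := split_pieces n K R (by rw [hRcard]; omega)
    have hPsub : ∀ j, P j ⊆ R := fun j =>
      hPunion ▸ Finset.subset_biUnion_of_mem P (Finset.mem_univ j)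
    have hJT : ∀ j, J j ⊆ T := fun j => by
      rw [hTI, ← hJunion]; exact Finset.subset_biUnion_of_mem J (Finset.mem_univ j)
    have hTR : Disjoint T R := Finset.disjoint_sdiff
    set Y := fun j => J j ∪ P j with hY
    have hpart : IsPartition Y := by
      constructor
      · intro i j hij
        rw [hY]
        apply Finset.disjoint_union_left.2
        refine ⟨Finset.disjoint_union_right.2 ⟨hJdisj i j hij, hTR.mono (hJT i) (hPsub j)⟩,
          Finset.disjoint_union_right.2 ⟨(hTR.mono (hJT j) (hPsub i)).symm, hPdisj i j hij⟩⟩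
      · have : Finset.univ.biUnion Y = Finset.univ.biUnion J ∪ Finset.univ.biUnion P := by
          ext x
          simp only [hY, Finset.mem_biUnion, Finset.mem_union, Finset.mem_univ, true_and]
          constructor
          · rintro ⟨j, hj | hj⟩
            · exact Or.inl ⟨j, hj⟩
            · exact Or.inr ⟨j, hj⟩
          · rintro (⟨j, hj⟩ | ⟨j, hj⟩)
            · exact ⟨j, Or.inl hj⟩
            · exact ⟨j, Or.inr hj⟩
        rw [this, hJunion, ← hTI, hPunion, hR, Finset.union_sdiff_of_subset (Finset.subset_univ T)]
    have hYK : ∀ j, c (Y j) ≤ K := by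
      intro j
      have h1 : c (Y j) ≤ c (J j) + ((Y j \ J j)).card :=
        c_le_add hmarg Finset.subset_union_left
      have h2 : Y j \ J j ⊆ P j := by
        rw [hY]
        intro x hx
        rw [Finset.mem_sdiff, Finset.mem_union] at hx
        tauto
      have := Finset.card_le_card h2
      have := hPcard j
      have := hJ0 j
      omega
    have hne : (Finset.univ.image fun j => c (Y j)).Nonempty :=
      (Finset.univ_nonempty_iff.2 ⟨⟨0, hn⟩⟩).image _
    set t := (Finset.univ.image fun j => c (Y j)).max' hne with ht
    have htmem : ∃ j : Fin n, c (Y j) = t := by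
      have := (Finset.univ.image fun j => c (Y j)).max'_mem hne
      rw [Finset.mem_image] at this
      obtain ⟨j, -, hj⟩ := this
      exact ⟨j, hj⟩
    have hτt : τ ≤ t := by
      refine hlb ⟨Y, hpart, ⟨?_, ?_⟩⟩
      · obtain ⟨j, hj⟩ := htmem; exact ⟨j, hj⟩
      · rintro y ⟨j, rfl⟩
        exact Finset.le_max' (Finset.univ.image fun j => c (Y j)) (c (Y j)) (Finset.mem_image.2 ⟨j, Finset.mem_univ j, rfl⟩)
    obtain ⟨j, hj⟩ := htmem
    exact hτt.trans (hj ▸ hYK j)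
  -- Final arithmetic
  have hn0 : (0 : ℚ) < n := by exact_mod_cast hn
  refine le_antisymm ?_ ?_
  · have hq0 : (0 : ℚ) ≤ ((m : ℚ) - rkn) / n := by
      apply div_nonneg _ hn0.le
      have : (rkn : ℚ) ≤ m := by exact_mod_cast hrm
      linarith
    have hceil_nonneg : 0 ≤ ⌈((m : ℚ) - rkn) / n⌉ := Int.ceil_nonneg hq0
    set K := (⌈((m : ℚ) - rkn) / n⌉).toNat with hKdef
    have hK : (K : ℤ) = ⌈((m : ℚ) - rkn) / n⌉ := Int.toNat_of_nonneg hceil_nonneg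
    have hmK : m ≤ rkn + n * K := by
      have h1 : ((m : ℚ) - rkn) / n ≤ (K : ℚ) := by
        refine (Int.le_ceil _).trans ?_
        exact_mod_cast hK.ge
      rw [div_le_iff₀ hn0] at h1
      have h2 : (m : ℚ) ≤ rkn + n * K := by linarith
      exact_mod_cast h2
    calc (τ : ℤ) ≤ (K : ℤ) := by exact_mod_cast F2 K hmK
      _ = _ := hK
  · rw [Int.ceil_le, div_le_iff₀ hn0]
    have : (m : ℚ) ≤ rkn + n * τ := by exact_mod_cast F1
    push_cast
    linarith
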